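/- arXiv:2411.09108 — 3 statements merged into one kernel-verified Lean document; each statement's English description precedes it below -/
import Mathlib

section
/- The number of lattice paths from (0,0) to (n, 0) staying in the upper half-plane (nonnegative second coordinate) with steps (1,1), (1,-1), and (1,0), where steps (1,0) occur only at height 0, equals the central binomial coefficient C(n, floor(n/2)). -/
/-- A dispersed Dyck path of length `n`, encoded as a step function `f : ℕ → ℤ`
(zero outside `[0, n)`): steps are `(1,1)`, `(1,-1)` or `(1,0)` (encoded by their
height increments `1`, `-1`, `0`), all partial sums (heights) are nonnegative,
the path ends at height `0`, and horizontal steps `(1,0)` occur only at height `0`. -/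
def IsDispersedDyck (n : ℕ) (f : ℕ → ℤ) : Prop :=
  (∀ j, n ≤ j → f j = 0) ∧
  (∀ j < n, f j = 1 ∨ f j = -1 ∨ f j = 0) ∧
  (∀ i, 0 ≤ ∑ j ∈ Finset.range i, f j) ∧
  (∑ j ∈ Finset.range n, f j = 0) ∧
  (∀ j < n, f j = 0 → ∑ i ∈ Finset.range j, f i = 0)

/-- A "dispersed path" of length `n` ending at height `h`. -/
def PathTo (n h : ℕ) (f : ℕ → ℤ) : Prop :=
  (∀ j, n ≤ j → f j = 0) ∧
  (∀ j < n, f j = 1 ∨ f j = -1 ∨ f j = 0) ∧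
  (∀ i, 0 ≤ ∑ j ∈ Finset.range i, f j) ∧
  (∑ j ∈ Finset.range n, f j = (h : ℤ)) ∧
  (∀ j < n, f j = 0 → ∑ i ∈ Finset.range j, f i = 0)

lemma sum_range_eq_of_zero {f : ℕ → ℤ} {n : ℕ} (hf : ∀ j, n ≤ j → f j = 0)
    {i : ℕ} (hi : n ≤ i) :
    ∑ j ∈ Finset.range i, f j = ∑ j ∈ Finset.range n, f j :=
  (Finset.sum_subset (Finset.range_subset_range.mpr hi)
    (fun x _ hx => hf x (by simp at hx; omega))).symm

instance finite_pathTo (n h : ℕ) : Finite {f : ℕ → ℤ // PathTo n h f} := by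
  have hinj : Function.Injective
      (fun f : {f : ℕ → ℤ // PathTo n h f} =>
        fun j : Fin n => (⟨f.1 j, by
          rcases f.2.2.1 j j.2 with h1 | h1 | h1 <;> simp [h1]⟩ :
            ({1, -1, 0} : Finset ℤ))) := by
    intro a b hab
    apply Subtype.ext; funext j
    by_cases hj : j < n
    · exact congrArg Subtype.val (congrFun hab ⟨j, hj⟩)
    · rw [a.2.1 j (le_of_not_gt hj), b.2.1 j (le_of_not_gt hj)]
  exact Finite.of_injective _ hinj

/-- Truncating the last step. -/
lemma trunc_pathTo {n h : ℕ} {f : ℕ → ℤ} (hf : PathTo (n + 1) h f) (h' : ℕ)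
    (hsum : ∑ j ∈ Finset.range n, f j = (h' : ℤ)) :
    PathTo n h' (fun j => if j < n then f j else 0) := by
  obtain ⟨hzero, hstep, hnonneg, htot, hflat⟩ := hf
  have hA : ∀ i ≤ n, ∑ j ∈ Finset.range i, (fun j => if j < n then f j else 0) j
      = ∑ j ∈ Finset.range i, f j := by
    intro i hi
    refine Finset.sum_congr rfl fun j hj => ?_
    simp only [Finset.mem_range] at hj
    simp [show j < n by omega]
  have hB : ∀ i, n ≤ i → ∑ j ∈ Finset.range i, (fun j => if j < n then f j else 0) j
      = ∑ j ∈ Finset.range n, f j := by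
    intro i hi
    rw [sum_range_eq_of_zero (f := fun j => if j < n then f j else 0)
      (fun j hj => by simp [show ¬ j < n by omega]) hi]
    exact hA n le_rfl
  refine ⟨fun j hj => by simp [show ¬ j < n by omega],
    fun j hj => by simpa [hj] using hstep j (by omega), ?_, ?_, ?_⟩
  · intro i
    rcases le_or_gt i n with hi | hi
    · rw [hA i hi]; exact hnonneg i
    · rw [hB i hi.le]; exact hnonneg n
  · rw [hB n le_rfl]; exact hsum
  · intro j hj h0
    rw [hA j hj.le]
    exact hflat j (by omega) (by simpa [hj] using h0)

/-- Extending by one step. -/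
lemma ext_pathTo {n h' : ℕ} {g : ℕ → ℤ} (hg : PathTo n h' g) (v : ℤ)
    (hv : v = 1 ∨ v = -1 ∨ v = 0) (h : ℕ) (hsum : (h' : ℤ) + v = (h : ℤ))
    (hflat : v = 0 → h' = 0) :
    PathTo (n + 1) h (Function.update g n v) := by
  obtain ⟨hzero, hstep, hnonneg, htot, hflt⟩ := hg
  have hA : ∀ i ≤ n, ∑ j ∈ Finset.range i, Function.update g n v j
      = ∑ j ∈ Finset.range i, g j := by
    intro i hi
    refine Finset.sum_congr rfl fun j hj => ?_
    simp only [Finset.mem_range] at hj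
    rw [Function.update_of_ne (by omega)]
  have hB : ∑ j ∈ Finset.range (n + 1), Function.update g n v j
      = ∑ j ∈ Finset.range n, g j + v := by
    rw [Finset.sum_range_succ, hA n le_rfl, Function.update_self]
  have hC : ∀ i, n + 1 ≤ i → ∑ j ∈ Finset.range i, Function.update g n v j
      = ∑ j ∈ Finset.range n, g j + v := by
    intro i hi
    rw [sum_range_eq_of_zero (f := Function.update g n v)
      (fun j hj => by rw [Function.update_of_ne (by omega)]; exact hzero j (by omega)) hi, hB]
  refine ⟨fun j hj => by rw [Function.update_of_ne (by omega)]; exact hzero j (by omega),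
    ?_, ?_, ?_, ?_⟩
  · intro j hj
    rcases eq_or_lt_of_le (Nat.lt_succ_iff.mp hj) with rfl | hj'
    · simpa using hv
    · rw [Function.update_of_ne (by omega)]; exact hstep j hj'
  · intro i
    rcases le_or_gt i n with hi | hi
    · rw [hA i hi]; exact hnonneg i
    · rw [hC i hi]; rw [htot, hsum]; positivity
  · rw [hC (n + 1) le_rfl, htot, hsum]
  · intro j hj h0
    rcases eq_or_lt_of_le (Nat.lt_succ_iff.mp hj) with rfl | hj'
    · rw [Function.update_self] at h0
      rw [hA j le_rfl, htot, hflat h0]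
      simp
    · rw [Function.update_of_ne (by omega)] at h0
      rw [hA j hj'.le]
      exact hflt j hj' h0

lemma last_step {n h : ℕ} {f : ℕ → ℤ} (hf : PathTo (n + 1) h f) (hne : f n ≠ -1) :
    f n = (h : ℤ) - ((h - 1 : ℕ) : ℤ) := by
  obtain ⟨hzero, hstep, hnonneg, htot, hflat⟩ := hf
  have hS : ∑ j ∈ Finset.range n, f j + f n = (h : ℤ) := by
    rw [← Finset.sum_range_succ]; exact htot
  have hSnn : 0 ≤ ∑ j ∈ Finset.range n, f j := hnonneg n
  rcases hstep n (by omega) with h1 | h1 | h1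
  · -- f n = 1 : then h ≥ 1
    have : 1 ≤ (h : ℤ) := by omega
    have hh : 1 ≤ h := by exact_mod_cast this
    rw [h1]
    have : ((h - 1 : ℕ) : ℤ) = (h : ℤ) - 1 := by omega
    omega
  · exact absurd h1 hne
  · -- f n = 0 : flat step, so previous height is 0, hence h = 0
    have h2 : ∑ i ∈ Finset.range n, f i = 0 := hflat n (by omega) h1
    have : (h : ℤ) = 0 := by omega
    have hh : h = 0 := by exact_mod_cast this
    subst hh
    simpa using h1


lemma binom_step (n h : ℕ) :
    (if h ≤ n + 1 then (n + 1).choose ((n + 1 - h) / 2) else 0) =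
    (if h + 1 ≤ n then n.choose ((n - (h + 1)) / 2) else 0) +
    (if h - 1 ≤ n then n.choose ((n - (h - 1)) / 2) else 0) := by
  rcases lt_or_ge (n + 1) h with hh | hh
  · rw [if_neg (show ¬ h ≤ n + 1 by omega), if_neg (show ¬ h + 1 ≤ n by omega),
      if_neg (show ¬ h - 1 ≤ n by omega)]
  rw [if_pos hh, if_pos (show h - 1 ≤ n by omega)]
  rcases eq_or_lt_of_le hh with rfl | hh2
  · rw [if_neg (show ¬ n + 1 + 1 ≤ n by omega),
      show (n + 1 - (n + 1)) / 2 = 0 by omega, show (n - (n + 1 - 1)) / 2 = 0 by omega]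
    simp
  · have hh3 : h ≤ n := by omega
    rcases eq_or_lt_of_le hh3 with rfl | hh4
    · rw [if_neg (show ¬ h + 1 ≤ h by omega),
        show (h + 1 - h) / 2 = 0 by omega, show (h - (h - 1)) / 2 = 0 by omega]
      simp
    · rw [if_pos (show h + 1 ≤ n by omega)]
      rcases Nat.eq_zero_or_pos h with rfl | hpos
      · rcases Nat.even_or_odd n with ⟨m, hm⟩ | ⟨m, hm⟩
        · rcases m with _ | k
          · omega
          · rw [show (n + 1 - 0) / 2 = k + 1 by omega, show (n - (0 + 1)) / 2 = k by omega,
              show (n - (0 - 1)) / 2 = k + 1 by omega]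
            exact Nat.choose_succ_succ n k
        · have hs : n.choose (((n - (0 - 1)) / 2)) = n.choose (m + 1) := by
            rw [show (n - (0 - 1)) / 2 = m by omega]
            have := Nat.choose_symm (show m + 1 ≤ n by omega)
            rw [show n - (m + 1) = m by omega] at this
            exact this
          rw [hs, show (n + 1 - 0) / 2 = m + 1 by omega, show (n - (0 + 1)) / 2 = m by omega]
          exact Nat.choose_succ_succ n m
      · rw [show (n + 1 - h) / 2 = (n - (h + 1)) / 2 + 1 by omega,
          show (n - (h - 1)) / 2 = (n - (h + 1)) / 2 + 1 by omega]
        exact Nat.choose_succ_succ n ((n - (h + 1)) / 2)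

lemma card_pathTo (n : ℕ) : ∀ h : ℕ,
    Nat.card {f : ℕ → ℤ // PathTo n h f}
      = if h ≤ n then n.choose ((n - h) / 2) else 0 := by
  induction n with
  | zero =>
    intro h
    rcases Nat.eq_zero_or_pos h with rfl | hh
    · haveI : Unique {f : ℕ → ℤ // PathTo 0 0 f} :=
        { default := ⟨fun _ => 0, by
            refine ⟨fun _ _ => rfl, by omega, by simp, by simp, by omega⟩⟩
          uniq := fun f => Subtype.ext (funext fun j => f.2.1 j (Nat.zero_le j)) }
      simp
    · haveI : IsEmpty {f : ℕ → ℤ // PathTo 0 h f} := ⟨fun f => by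
        have := f.2.2.2.2.1
        simp at this
        omega⟩
      rw [Nat.card_of_isEmpty, if_neg (by omega)]
  | succ n ih =>
    intro h
    have key : Nat.card {f : ℕ → ℤ // PathTo (n + 1) h f}
        = Nat.card {g : ℕ → ℤ // PathTo n (h + 1) g}
          + Nat.card {g : ℕ → ℤ // PathTo n (h - 1) g} := by
      rw [← Nat.card_sum]
      apply Nat.card_congr
      have hSf : ∀ (f : ℕ → ℤ), PathTo (n + 1) h f →
          ∑ j ∈ Finset.range n, f j = (h : ℤ) - f n := by
        intro f hf
        have := hf.2.2.2.1
        rw [Finset.sum_range_succ] at this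
        omega
      refine Equiv.ofBijective (fun f =>
        if hfn : f.1 n = -1 then
          Sum.inl ⟨fun j => if j < n then f.1 j else 0,
            trunc_pathTo f.2 (h + 1) (by rw [hSf f.1 f.2, hfn]; push_cast; ring)⟩
        else
          Sum.inr ⟨fun j => if j < n then f.1 j else 0,
            trunc_pathTo f.2 (h - 1) (by rw [hSf f.1 f.2, last_step f.2 hfn]; ring)⟩) ⟨?_, ?_⟩
      · -- injective
        intro a b hab
        by_cases ha : a.1 n = -1 <;> by_cases hb : b.1 n = -1 <;>
          simp only [ha, hb, dif_pos, dif_neg, not_false_iff] at hab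
        · apply Subtype.ext; funext j
          have := congrArg Subtype.val (Sum.inl.inj hab)
          have hj := congrFun this j
          simp only at hj
          rcases lt_trichotomy j n with h1 | rfl | h1
          · simpa [h1] using hj
          · rw [ha, hb]
          · rw [a.2.1 j (by omega), b.2.1 j (by omega)]
        · exact absurd hab (by simp)
        · exact absurd hab (by simp)
        · apply Subtype.ext; funext j
          have := congrArg Subtype.val (Sum.inr.inj hab)
          have hj := congrFun this j
          simp only at hj
          rcases lt_trichotomy j n with h1 | rfl | h1
          · simpa [h1] using hj
          · rw [last_step a.2 ha, last_step b.2 hb]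
          · rw [a.2.1 j (by omega), b.2.1 j (by omega)]
      · -- surjective
        rintro (⟨g, hg⟩ | ⟨g, hg⟩)
        · refine ⟨⟨Function.update g n (-1),
            ext_pathTo hg (-1) (by tauto) h (by push_cast; ring) (by norm_num)⟩, ?_⟩
          have hfn : Function.update g n (-1) n = -1 := Function.update_self _ _ _
          dsimp only
          rw [dif_pos hfn]
          congr 1
          apply Subtype.ext; funext j
          rcases lt_or_ge j n with h1 | h1
          · simp [h1, Function.update_of_ne (show j ≠ n by omega)]
          · simp [show ¬ j < n by omega, hg.1 j h1]
        · set v : ℤ := (h : ℤ) - ((h - 1 : ℕ) : ℤ) with hv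
          have hv01 : v = 1 ∨ v = 0 := by
            rcases Nat.eq_zero_or_pos h with rfl | hh
            · right; simp [hv]
            · left; rw [hv]; have : ((h - 1 : ℕ) : ℤ) = (h : ℤ) - 1 := by omega
              omega
          have hvflat : v = 0 → h - 1 = 0 := by
            intro h0
            rcases Nat.eq_zero_or_pos h with rfl | hh
            · rfl
            · exfalso; rw [hv] at h0
              have : ((h - 1 : ℕ) : ℤ) = (h : ℤ) - 1 := by omega
              omega
          refine ⟨⟨Function.update g n v,
            ext_pathTo hg v (by rcases hv01 with h1 | h1 <;> simp [h1]) h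
              (by rw [hv]; ring) hvflat⟩, ?_⟩
          have hfn : Function.update g n v n = v := Function.update_self _ _ _
          dsimp only
          rw [dif_neg (show ¬ Function.update g n v n = -1 by
            rw [Function.update_self]; rcases hv01 with h1 | h1 <;> simp [h1])]
          congr 1
          apply Subtype.ext; funext j
          rcases lt_or_ge j n with h1 | h1
          · simp [h1, Function.update_of_ne (show j ≠ n by omega)]
          · simp [show ¬ j < n by omega, hg.1 j h1]
    rw [key, ih (h + 1), ih (h - 1)]
    exact (binom_step n h).symm

/-- The number of dispersed Dyck paths of length `n` is the central binomial
coefficient `C(n, ⌊n/2⌋)`. -/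
theorem card_dispersedDyck (n : ℕ) :
    Nat.card {f : ℕ → ℤ // IsDispersedDyck n f} = n.choose (n / 2) := by
  have e : {f : ℕ → ℤ // IsDispersedDyck n f} ≃ {f : ℕ → ℤ // PathTo n 0 f} :=
    Equiv.subtypeEquivRight (fun f => by
      unfold IsDispersedDyck PathTo
      norm_num)
  rw [Nat.card_congr e, card_pathTo n 0]
  simp
end

section
/- There is a bijection between dispersed Dyck paths of length n and lattice paths of length n from (0,0) to (n, N) using only steps (1,1) and (1,-1) (without any positivity constraint), where N = 0 if n is even and N = -1 if n is odd. -/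
/-- An unconstrained lattice path of length `n` with steps `(1,1)`, `(1,-1)`,
from `(0,0)` to `(n, N)` where `N = 0` if `n` is even and `N = -1` if `n` is odd. -/
def IsBalancedPath (n : ℕ) (f : ℕ → ℤ) : Prop :=
  (∀ j, n ≤ j → f j = 0) ∧
  (∀ j < n, f j = 1 ∨ f j = -1) ∧
  (∑ j ∈ Finset.range n, f j = if Even n then 0 else -1)


namespace DDAux

def DF : ℕ → ℤ → Finset (List ℤ)
  | 0, h => if h = 0 then {([] : List ℤ)} else ∅
  | n+1, h =>
      ((DF n (h-1)).image (fun l => (1 : ℤ) :: l)) ∪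
      ((if 0 ≤ h then (DF n (h+1)).image (fun l => (-1 : ℤ) :: l) else ∅) ∪
       (if h = 0 then (DF n 0).image (fun l => (0 : ℤ) :: l) else ∅))

def BF : ℕ → ℤ → Finset (List ℤ)
  | 0, h => if h = 0 then {([] : List ℤ)} else ∅
  | n+1, h =>
      ((BF n (h-1)).image (fun l => (1 : ℤ) :: l)) ∪
      ((BF n (h+1)).image (fun l => (-1 : ℤ) :: l))

lemma disj_cons {x y : ℤ} (hxy : x ≠ y) (A B : Finset (List ℤ)) :
    Disjoint (A.image (fun l => x :: l)) (B.image (fun l => y :: l)) := by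
  rw [Finset.disjoint_left]
  rintro a ha hb
  obtain ⟨l, -, rfl⟩ := Finset.mem_image.1 ha
  obtain ⟨l', -, h⟩ := Finset.mem_image.1 hb
  simp at h
  exact hxy h.1.symm

lemma card_cons (x : ℤ) (A : Finset (List ℤ)) :
    (A.image (fun l => x :: l)).card = A.card :=
  Finset.card_image_of_injective A (List.cons_injective)

lemma card_DF_succ (n : ℕ) (h : ℤ) :
    (DF (n+1) h).card = (DF n (h-1)).card +
      ((if 0 ≤ h then (DF n (h+1)).card else 0) +
       (if h = 0 then (DF n 0).card else 0)) := by
  rw [DF, Finset.card_union_of_disjoint, Finset.card_union_of_disjoint]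
  · congr 1
    · exact card_cons _ _
    congr 1
    · split_ifs
      · exact card_cons _ _
      · simp
    · split_ifs
      · exact card_cons _ _
      · simp
  · split_ifs <;>
      simp [Finset.disjoint_empty_left, Finset.disjoint_empty_right, disj_cons (by norm_num : (-1:ℤ) ≠ 0)]
  · apply Finset.disjoint_union_right.2
    constructor <;> split_ifs <;>
      simp [disj_cons (by norm_num : (1:ℤ) ≠ -1), disj_cons (by norm_num : (1:ℤ) ≠ 0)]

lemma card_BF_succ (n : ℕ) (h : ℤ) :
    (BF (n+1) h).card = (BF n (h-1)).card + (BF n (h+1)).card := by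
  rw [BF, Finset.card_union_of_disjoint (disj_cons (by norm_num) _ _), card_cons, card_cons]


def db (n a : ℕ) : ℕ := if a ≤ n then n.choose ((n - a)/2) else 0

def Db (n : ℕ) (h : ℤ) : ℕ := if 0 ≤ h then db n h.toNat else 0

def Bb (n : ℕ) (h : ℤ) : ℕ :=
  if -(n:ℤ) ≤ h ∧ h ≤ n ∧ ((n:ℤ) - h) % 2 = 0 then n.choose (((n:ℤ) - h)/2).toNat else 0

lemma Db_of_nonneg {n : ℕ} {h : ℤ} (hh : 0 ≤ h) : Db n h = db n h.toNat := if_pos hh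
lemma Db_of_neg {n : ℕ} {h : ℤ} (hh : h < 0) : Db n h = 0 := if_neg (by omega)

lemma db_step (n a : ℕ) : db n a + db n (a+2) = db (n+1) (a+1) := by
  unfold db
  rcases lt_trichotomy a n with hlt | rfl | hgt
  · by_cases h2 : a + 2 ≤ n
    · rw [if_pos (by omega), if_pos h2, if_pos (by omega)]
      have e1 : (n - (a+2))/2 = (n-a)/2 - 1 := by omega
      have e2 : (n + 1 - (a+1))/2 = (n-a)/2 := by omega
      obtain ⟨r, hr⟩ : ∃ r, (n-a)/2 = r + 1 := ⟨(n-a)/2 - 1, by omega⟩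
      rw [e1, e2, hr, show r+1-1 = r from rfl, Nat.choose_succ_succ']
      omega
    · have hn : n = a + 1 := by omega
      subst hn
      rw [if_pos (by omega), if_neg h2, if_pos (by omega)]
      rw [show (a+1-a)/2 = 0 from by omega, show (a+1+1-(a+1))/2 = 0 from by omega]
      simp
  · rw [if_pos le_rfl, if_neg (by omega), if_pos (by omega)]
    rw [show (a-a)/2 = 0 from by omega, show (a+1-(a+1))/2 = 0 from by omega]
    simp
  · rw [if_neg (by omega), if_neg (by omega), if_neg (by omega)]

lemma db_step0 (n : ℕ) : db n 1 + db n 0 = db (n+1) 0 := by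
  unfold db
  rcases n with _ | m
  · simp
  rw [if_pos (by omega), if_pos (by omega), if_pos (by omega)]
  rcases Nat.even_or_odd m with ⟨r, hr⟩ | ⟨r, hr⟩
  · -- m = r + r, n = 2r+1 odd
    obtain rfl : m = r + r := hr
    rw [show (r+r+1-1)/2 = r from by omega, show (r+r+1-0)/2 = r from by omega,
      show (r+r+1+1-0)/2 = r+1 from by omega]
    rw [show r+r+1+1 = (r+r+1)+1 from rfl, Nat.choose_succ_succ']
    have := Nat.choose_symm (show r ≤ r+r+1 from by omega)
    rw [show r+r+1-r = r+1 from by omega] at this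
    omega
  · -- m = 2r+1, n = 2r+2 even
    obtain rfl : m = 2*r + 1 := hr
    rw [show (2*r+1+1-1)/2 = r from by omega, show (2*r+1+1-0)/2 = r+1 from by omega,
      show (2*r+1+1+1-0)/2 = r+1 from by omega]
    have hP : ((2*r+1+1)+1).choose (r+1) = (2*r+1+1).choose r + (2*r+1+1).choose (r+1) :=
      Nat.choose_succ_succ' _ _
    omega

lemma Db_step (n : ℕ) (h : ℤ) :
    Db n (h-1) + ((if 0 ≤ h then Db n (h+1) else 0) + (if h = 0 then Db n 0 else 0)) =
      Db (n+1) h := by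
  rcases lt_trichotomy h 0 with hneg | rfl | hpos
  · rw [if_neg (show ¬(0:ℤ) ≤ h from by omega), if_neg (show ¬h = 0 from by omega),
      Db_of_neg (show h-1 < 0 from by omega), Db_of_neg hneg]
  · rw [Db_of_neg (by omega), if_pos le_rfl, if_pos rfl,
      Db_of_nonneg (by omega : (0:ℤ) ≤ 0+1), Db_of_nonneg le_rfl, Db_of_nonneg le_rfl]
    rw [show ((0:ℤ)+1).toNat = 1 from rfl, show ((0:ℤ)).toNat = 0 from rfl]
    rw [zero_add]
    exact db_step0 n
  · rw [Db_of_nonneg (by omega), if_pos (by omega), if_neg (by omega),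
      Db_of_nonneg (by omega), Db_of_nonneg (by omega)]
    obtain ⟨a, ha⟩ : ∃ a : ℕ, h = (a : ℤ) + 1 := ⟨(h-1).toNat, by omega⟩
    rw [show (h-1).toNat = a from by omega, show (h+1).toNat = a + 2 from by omega,
      show h.toNat = a + 1 from by omega]
    rw [add_zero]
    exact db_step n a

lemma Bb_step (n : ℕ) (h : ℤ) : Bb n (h-1) + Bb n (h+1) = Bb (n+1) h := by
  unfold Bb
  push_cast
  split_ifs with c1 c2 c3 c3 c2 c3 c3
  · -- all three
    obtain ⟨k, hk⟩ : ∃ k : ℕ, ((n:ℤ)+1 - h)/2 = (k:ℤ) := ⟨_, (Int.toNat_of_nonneg (by omega)).symm⟩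
    obtain ⟨r, hrr⟩ : ∃ r, k = r + 1 := ⟨k-1, by omega⟩
    rw [show (((n:ℤ) - (h-1))/2).toNat = k from by omega,
      show (((n:ℤ) - (h+1))/2).toNat = r from by omega,
      show (((n:ℤ) + 1 - h)/2).toNat = k from by omega, hrr]
    have := Nat.choose_succ_succ' n r
    omega
  · exact absurd (show _ from by omega : (-((n:ℤ)+1) ≤ h ∧ h ≤ (n:ℤ)+1 ∧ ((n:ℤ)+1-h) % 2 = 0)) c3
  · -- c1, ¬c2, c3 : h = n+1
    rw [show (((n:ℤ) - (h-1))/2).toNat = 0 from by omega,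
      show (((n:ℤ) + 1 - h)/2).toNat = 0 from by omega]
    simp
  · exact absurd (show _ from by omega : (-((n:ℤ)+1) ≤ h ∧ h ≤ (n:ℤ)+1 ∧ ((n:ℤ)+1-h) % 2 = 0)) c3
  · -- ¬c1, c2, c3 : h = -(n+1)
    rw [show (((n:ℤ) - (h+1))/2).toNat = n from by omega,
      show (((n:ℤ) + 1 - h)/2).toNat = n+1 from by omega]
    simp
  · exact absurd (show _ from by omega : (-((n:ℤ)+1) ≤ h ∧ h ≤ (n:ℤ)+1 ∧ ((n:ℤ)+1-h) % 2 = 0)) c3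
  all_goals first | rfl | (exfalso; omega)

lemma Db_eq_Bb (n : ℕ) : Db n 0 = Bb n (if Even n then 0 else -1) := by
  rcases Nat.even_or_odd n with he | ho
  · rw [if_pos he]
    obtain ⟨m, rfl⟩ := he
    rw [Db_of_nonneg le_rfl, show ((0:ℤ)).toNat = 0 from rfl, db, if_pos (by omega), Bb,
      if_pos ⟨by omega, by omega, by omega⟩]
    congr 1
  · rw [if_neg (Nat.not_even_iff_odd.2 ho)]
    obtain ⟨m, rfl⟩ := ho
    rw [Db_of_nonneg le_rfl, show ((0:ℤ)).toNat = 0 from rfl, db, if_pos (by omega), Bb,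
      if_pos ⟨by omega, by omega, by omega⟩]
    rw [show (2*m+1-0)/2 = m from by omega]
    rw [show ((((2*m+1:ℕ)):ℤ) - (-1))/2 = (m:ℤ)+1 from by push_cast; omega,
      show ((m:ℤ)+1).toNat = m+1 from by omega]
    have := Nat.choose_symm (show m ≤ 2*m+1 from by omega)
    rw [show 2*m+1-m = m+1 from by omega] at this
    omega


lemma mem_BF : ∀ (n : ℕ) (h : ℤ) (l : List ℤ),
    l ∈ BF n h ↔ l.length = n ∧ l.sum = h ∧
      (∀ m < n, l.getD m 0 = 1 ∨ l.getD m 0 = -1) := by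
  intro n
  induction n with
  | zero =>
    intro h l
    rw [BF]
    split_ifs with hh
    · subst hh
      simp only [Finset.mem_singleton]
      constructor
      · rintro rfl; simp
      · rintro ⟨h1, -, -⟩; exact List.length_eq_zero_iff.1 h1
    · simp only [Finset.notMem_empty, false_iff]
      rintro ⟨h1, h2, -⟩
      exact hh (by rw [← h2, List.length_eq_zero_iff.1 h1]; rfl)
  | succ n ih =>
    intro h l
    rw [BF]
    rcases l with _ | ⟨x, t⟩
    · simp
    · simp only [Finset.mem_union, Finset.mem_image, List.cons.injEq]
      constructor
      · rintro (⟨a, ha, rfl, rfl⟩ | ⟨a, ha, rfl, rfl⟩) <;>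
          obtain ⟨h1, h2, h3⟩ := (ih _ _).1 ha
        · refine ⟨by simp [h1], by simp [h2], ?_⟩
          rintro (_ | m) hm
          · simp
          · simpa using h3 m (by omega)
        · refine ⟨by simp [h1], by simp [h2], ?_⟩
          rintro (_ | m) hm
          · simp
          · simpa using h3 m (by omega)
      · rintro ⟨h1, h2, h3⟩
        simp only [List.length_cons, Nat.succ_inj] at h1
        simp only [List.sum_cons] at h2
        have hx := h3 0 (by omega)
        simp only [List.getD_cons_zero] at hx
        have ht : ∀ m < n, t.getD m 0 = 1 ∨ t.getD m 0 = -1 := by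
          intro m hm
          simpa using h3 (m+1) (by omega)
        rcases hx with rfl | rfl
        · exact Or.inl ⟨t, (ih _ t).2 ⟨h1, by omega, ht⟩, rfl, rfl⟩
        · exact Or.inr ⟨t, (ih _ t).2 ⟨h1, by omega, ht⟩, rfl, rfl⟩


lemma mem_DF : ∀ (n : ℕ) (h : ℤ) (l : List ℤ),
    l ∈ DF n h ↔ l.length = n ∧ l.sum = h ∧ (∀ m, 0 ≤ (l.drop m).sum) ∧
      (∀ m < n, l.getD m 0 = 1 ∨ l.getD m 0 = -1 ∨
        (l.getD m 0 = 0 ∧ (l.drop (m+1)).sum = 0)) := by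
  intro n
  induction n with
  | zero =>
    intro h l
    rw [DF]
    split_ifs with hh
    · subst hh
      simp only [Finset.mem_singleton]
      constructor
      · rintro rfl; simp
      · rintro ⟨h1, -, -, -⟩; exact List.length_eq_zero_iff.1 h1
    · simp only [Finset.notMem_empty, false_iff]
      rintro ⟨h1, h2, -, -⟩
      exact hh (by rw [← h2, List.length_eq_zero_iff.1 h1]; rfl)
  | succ n ih =>
    intro h l
    rw [DF]
    rcases l with _ | ⟨x, t⟩
    · constructor
      · intro hmem
        exfalso
        simp only [Finset.mem_union, Finset.mem_image] at hmem
        rcases hmem with ⟨a, -, ha⟩ | hmem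
        · exact List.cons_ne_nil _ _ ha
        · rcases hmem with h2 | h2 <;>
          · split_ifs at h2 with hc
            · obtain ⟨a, -, ha⟩ := Finset.mem_image.1 h2
              exact List.cons_ne_nil _ _ ha
            · exact Finset.notMem_empty _ h2
      · rintro ⟨h1, -, -, -⟩; simp at h1
    · have hmem : (x :: t) ∈
          ((DF n (h-1)).image (fun l => (1 : ℤ) :: l)) ∪
          ((if 0 ≤ h then (DF n (h+1)).image (fun l => (-1 : ℤ) :: l) else ∅) ∪
           (if h = 0 then (DF n 0).image (fun l => (0 : ℤ) :: l) else ∅)) ↔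
          ((x = 1 ∧ t ∈ DF n (h-1)) ∨ (0 ≤ h ∧ x = -1 ∧ t ∈ DF n (h+1)) ∨
           (h = 0 ∧ x = 0 ∧ t ∈ DF n 0)) := by
        simp only [Finset.mem_union, Finset.mem_image, List.cons.injEq]
        constructor
        · rintro (⟨a, ha, rfl, rfl⟩ | hmem)
          · exact Or.inl ⟨rfl, ha⟩
          · rcases hmem with h2 | h2
            · split_ifs at h2 with hc
              · rw [Finset.mem_image] at h2
                obtain ⟨a, ha, heq⟩ := h2
                simp only [List.cons.injEq] at heq
                obtain ⟨rfl, rfl⟩ := heq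
                exact Or.inr (Or.inl ⟨hc, rfl, ha⟩)
              · exact absurd h2 (Finset.notMem_empty _)
            · split_ifs at h2 with hc
              · rw [Finset.mem_image] at h2
                obtain ⟨a, ha, heq⟩ := h2
                simp only [List.cons.injEq] at heq
                obtain ⟨rfl, rfl⟩ := heq
                exact Or.inr (Or.inr ⟨hc, rfl, ha⟩)
              · exact absurd h2 (Finset.notMem_empty _)
        · rintro (⟨rfl, ha⟩ | ⟨hc, rfl, ha⟩ | ⟨hc, rfl, ha⟩)
          · exact Or.inl ⟨t, ha, rfl, rfl⟩
          · exact Or.inr (Or.inl (by rw [if_pos hc]; exact Finset.mem_image.2 ⟨t, ha, rfl⟩))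
          · exact Or.inr (Or.inr (by rw [if_pos hc]; exact Finset.mem_image.2 ⟨t, ha, rfl⟩))
      rw [hmem]
      constructor
      · rintro (⟨rfl, ha⟩ | ⟨hc, rfl, ha⟩ | ⟨hc, rfl, ha⟩) <;>
          obtain ⟨h1, h2, h3, h4⟩ := (ih _ _).1 ha
        · refine ⟨by simp [h1], by simp [h2], ?_, ?_⟩
          · rintro (_ | m)
            · simp only [List.drop_zero, List.sum_cons]
              have := h3 0
              simp at this
              omega
            · simpa using h3 m
          · rintro (_ | m) hm
            · simp
            · simpa using h4 m (by omega)
        · refine ⟨by simp [h1], by simp [h2], ?_, ?_⟩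
          · rintro (_ | m)
            · simp only [List.drop_zero, List.sum_cons]
              omega
            · simpa using h3 m
          · rintro (_ | m) hm
            · simp
            · simpa using h4 m (by omega)
        · refine ⟨by simp [h1], by simp [h2]; omega, ?_, ?_⟩
          · rintro (_ | m)
            · simp only [List.drop_zero, List.sum_cons]
              omega
            · simpa using h3 m
          · rintro (_ | m) hm
            · simp only [List.getD_cons_zero]
              refine Or.inr (Or.inr ⟨by norm_num, ?_⟩)
              simpa using h2
            · simpa using h4 m (by omega)
      · rintro ⟨h1, h2, h3, h4⟩
        simp only [List.length_cons, Nat.succ_inj] at h1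
        simp only [List.sum_cons] at h2
        have hx := h4 0 (by omega)
        simp only [List.getD_cons_zero] at hx
        have ht3 : ∀ m, 0 ≤ (t.drop m).sum := by
          intro m; simpa using h3 (m+1)
        have ht4 : ∀ m < n, t.getD m 0 = 1 ∨ t.getD m 0 = -1 ∨
            (t.getD m 0 = 0 ∧ (t.drop (m+1)).sum = 0) := by
          intro m hm
          simpa using h4 (m+1) (by omega)
        have h0 : 0 ≤ h := by have := h3 0; simpa [← h2] using this
        rcases hx with rfl | rfl | ⟨rfl, hz⟩
        · exact Or.inl ⟨rfl, (ih _ t).2 ⟨h1, by omega, ht3, ht4⟩⟩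
        · exact Or.inr (Or.inl ⟨h0, rfl, (ih _ t).2 ⟨h1, by omega, ht3, ht4⟩⟩)
        · have hz' : t.sum = 0 := by simpa using hz
          exact Or.inr (Or.inr ⟨by omega, rfl, (ih _ t).2 ⟨h1, by omega, ht3, ht4⟩⟩)


lemma card_DF (n : ℕ) : ∀ h : ℤ, (DF n h).card = Db n h := by
  induction n with
  | zero =>
    intro h
    rw [DF, Db]
    rcases eq_or_ne h 0 with rfl | h0
    · simp [db]
    · rw [if_neg h0, Finset.card_empty]
      split_ifs with h1
      · unfold db
        rw [if_neg (by omega)]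
      · rfl
  | succ n ih =>
    intro h
    rw [card_DF_succ, ih, ← Db_step]
    congr 1
    · congr 1
      · split_ifs
        · exact ih _
        · rfl
      · split_ifs
        · exact ih _
        · rfl



lemma card_BF (n : ℕ) : ∀ h : ℤ, (BF n h).card = Bb n h := by
  induction n with
  | zero =>
    intro h
    rw [BF]
    rcases eq_or_ne h 0 with rfl | h0
    · rw [if_pos rfl, Bb, if_pos ⟨by omega, by omega, by omega⟩]
      simp
    · rw [if_neg h0, Finset.card_empty, Bb, if_neg (by push_cast; omega)]
  | succ n ih =>
    intro h
    rw [card_BF_succ, ih, ih, Bb_step]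

def toL (n : ℕ) (f : ℕ → ℤ) : List ℤ := (List.ofFn fun i : Fin n => f i).reverse

def ofL (l : List ℤ) : ℕ → ℤ := fun i => l.reverse.getD i 0

lemma toL_length (n : ℕ) (f : ℕ → ℤ) : (toL n f).length = n := by simp [toL]

lemma toL_succ (n : ℕ) (f : ℕ → ℤ) : toL (n+1) f = f n :: toL n f := by
  unfold toL
  rw [List.ofFn_succ']
  simp

lemma toL_drop_sum (f : ℕ → ℤ) : ∀ (n m : ℕ),
    ((toL n f).drop m).sum = ∑ j ∈ Finset.range (n - m), f j := by
  intro n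
  induction n with
  | zero => intro m; simp [toL]
  | succ n ih =>
    intro m
    rcases m with _ | m
    · have h0 := ih 0
      rw [List.drop_zero, Nat.sub_zero] at h0
      rw [List.drop_zero, toL_succ, List.sum_cons, Nat.sub_zero, Finset.sum_range_succ, h0]
      ring
    · rw [toL_succ, List.drop_succ_cons, ih m, Nat.succ_sub_succ]

lemma toL_getD (f : ℕ → ℤ) : ∀ (n m : ℕ), m < n → (toL n f).getD m 0 = f (n - 1 - m) := by
  intro n
  induction n with
  | zero => omega
  | succ n ih =>
    intro m hm
    rcases m with _ | m
    · rw [toL_succ]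
      simp
    · rw [toL_succ, List.getD_cons_succ, ih m (by omega)]
      congr 1
      omega

lemma ofL_toL (n : ℕ) (f : ℕ → ℤ) (hf : ∀ j, n ≤ j → f j = 0) : ofL (toL n f) = f := by
  funext i
  unfold ofL toL
  rw [List.reverse_reverse]
  rcases Nat.lt_or_ge i n with hi | hi
  · rw [List.getD_eq_getElem _ _ (by simpa using hi), List.getElem_ofFn]
  · rw [List.getD_eq_default _ _ (by simpa using hi)]
    exact (hf i hi).symm

lemma toL_ofL (n : ℕ) (l : List ℤ) (hl : l.length = n) : toL n (ofL l) = l := by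
  have key : List.ofFn (fun i : Fin n => (ofL l) i) = l.reverse := by
    apply List.ext_getElem
    · simp [hl]
    · intro i h1 h2
      rw [List.getElem_ofFn]
      show l.reverse.getD i 0 = _
      rw [List.getD_eq_getElem _ _ h2]
  unfold toL
  rw [key, List.reverse_reverse]

lemma ofL_support (l : List ℤ) (n : ℕ) (hl : l.length = n) : ∀ j, n ≤ j → ofL l j = 0 := by
  intro j hj
  unfold ofL
  rw [List.getD_eq_default _ _ (by simpa [hl] using hj)]

lemma ofL_drop_sum (l : List ℤ) (n : ℕ) (hl : l.length = n) (i : ℕ) (hi : i ≤ n) :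
    ∑ j ∈ Finset.range i, ofL l j = (l.drop (n - i)).sum := by
  have := toL_drop_sum (ofL l) n (n - i)
  rw [toL_ofL n l hl] at this
  rw [show n - (n - i) = i from by omega] at this
  exact this.symm

lemma ofL_getD (l : List ℤ) (n : ℕ) (hl : l.length = n) (j : ℕ) (hj : j < n) :
    ofL l j = l.getD (n - 1 - j) 0 := by
  have := toL_getD (ofL l) n (n - 1 - j) (by omega)
  rw [toL_ofL n l hl] at this
  rw [this, show n - 1 - (n - 1 - j) = j from by omega]


noncomputable def dispersedEquiv (n : ℕ) :
    {f : ℕ → ℤ // IsDispersedDyck n f} ≃ {l // l ∈ DF n 0} where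
  toFun := fun ⟨f, hf⟩ => ⟨toL n f, by
    obtain ⟨hsupp, hstep, hnonneg, htotal, hflat⟩ := hf
    refine (mem_DF n 0 _).2 ⟨toL_length n f, ?_, ?_, ?_⟩
    · have := toL_drop_sum f n 0
      simpa [htotal] using this
    · intro m
      rw [toL_drop_sum]
      exact hnonneg _
    · intro m hm
      rw [toL_getD f n m hm]
      rcases hstep (n-1-m) (by omega) with h1 | h1 | h1
      · exact Or.inl h1
      · exact Or.inr (Or.inl h1)
      · refine Or.inr (Or.inr ⟨h1, ?_⟩)
        rw [toL_drop_sum, show n - (m+1) = n-1-m from by omega]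
        exact hflat _ (by omega) h1⟩
  invFun := fun ⟨l, hl⟩ => ⟨ofL l, by
    obtain ⟨hlen, hsum, hdrop, hcond⟩ := (mem_DF n 0 l).1 hl
    have hext : ∀ i, n ≤ i →
        ∑ j ∈ Finset.range i, ofL l j = ∑ j ∈ Finset.range n, ofL l j :=
      fun i hi => (Finset.sum_subset (Finset.range_subset_range.2 hi)
        (fun x _ hx => ofL_support l n hlen x (by simpa using hx))).symm
    have htot : ∑ j ∈ Finset.range n, ofL l j = 0 := by
      rw [ofL_drop_sum l n hlen n le_rfl]
      simpa using hsum
    refine ⟨ofL_support l n hlen, ?_, ?_, htot, ?_⟩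
    · intro j hj
      rw [ofL_getD l n hlen j hj]
      rcases hcond (n-1-j) (by omega) with h1 | h1 | h1
      · exact Or.inl h1
      · exact Or.inr (Or.inl h1)
      · exact Or.inr (Or.inr h1.1)
    · intro i
      rcases le_or_gt i n with hi | hi
      · rw [ofL_drop_sum l n hlen i hi]
        exact hdrop _
      · rw [hext i (by omega), htot]
    · intro j hj hz
      rw [ofL_getD l n hlen j hj] at hz
      rcases hcond (n-1-j) (by omega) with h1 | h1 | h1
      · rw [hz] at h1; norm_num at h1
      · rw [hz] at h1; norm_num at h1
      · rw [ofL_drop_sum l n hlen j (by omega), show n - j = (n-1-j)+1 from by omega]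
        exact h1.2⟩
  left_inv := fun ⟨f, hf⟩ => Subtype.ext (ofL_toL n f hf.1)
  right_inv := fun ⟨l, hl⟩ => Subtype.ext (toL_ofL n l ((mem_DF n 0 l).1 hl).1)

noncomputable def balancedEquiv (n : ℕ) :
    {f : ℕ → ℤ // IsBalancedPath n f} ≃ {l // l ∈ BF n (if Even n then 0 else -1)} where
  toFun := fun ⟨f, hf⟩ => ⟨toL n f, by
    obtain ⟨hsupp, hstep, htotal⟩ := hf
    refine (mem_BF n _ _).2 ⟨toL_length n f, ?_, ?_⟩
    · have := toL_drop_sum f n 0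
      simpa [htotal] using this
    · intro m hm
      rw [toL_getD f n m hm]
      exact hstep (n-1-m) (by omega)⟩
  invFun := fun ⟨l, hl⟩ => ⟨ofL l, by
    obtain ⟨hlen, hsum, hcond⟩ := (mem_BF n _ l).1 hl
    refine ⟨ofL_support l n hlen, ?_, ?_⟩
    · intro j hj
      rw [ofL_getD l n hlen j hj]
      exact hcond (n-1-j) (by omega)
    · rw [ofL_drop_sum l n hlen n le_rfl]
      simpa using hsum⟩
  left_inv := fun ⟨f, hf⟩ => Subtype.ext (ofL_toL n f hf.1)
  right_inv := fun ⟨l, hl⟩ => Subtype.ext (toL_ofL n l ((mem_BF n _ l).1 hl).1)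

end DDAux

/-- There is a bijection between dispersed Dyck paths of length `n` and lattice
paths of length `n` from `(0,0)` to `(n, N)` with steps `(1,±1)` only,
where `N = 0` for `n` even and `N = -1` for `n` odd. -/
theorem dispersedDyck_equiv_balancedPath (n : ℕ) :
    Nonempty ({f : ℕ → ℤ // IsDispersedDyck n f} ≃ {f : ℕ → ℤ // IsBalancedPath n f}) := by
  have card_eq : (DDAux.DF n 0).card = (DDAux.BF n (if Even n then 0 else -1)).card := by
    rw [DDAux.card_DF, DDAux.card_BF, DDAux.Db_eq_Bb]
  exact ⟨(DDAux.dispersedEquiv n).trans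
    ((Finset.equivOfCardEq card_eq).trans (DDAux.balancedEquiv n).symm)⟩
end

section
/- If tau is a non-crossing involution on a finite totally ordered set that preserves intervals between fixed points, and {0,...,k} = A_1 ∪ ... ∪ A_q is its decomposition into ordered minimal nonempty tau-invariant subsets, then each A_j either contains exactly one element (which is a fixed point of tau) or contains an even number of elements, none of which is fixed by tau. -/
/-- A permutation of `{0,…,k}` is non-crossing if there are no indices
`i < j < τ i < τ j`. -/
def NonCrossing {n : ℕ} (τ : Equiv.Perm (Fin n)) : Prop :=
  ¬ ∃ i j : Fin n, i < j ∧ j < τ i ∧ τ i < τ j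

/-- `τ` preserves intervals between fixed points: whenever `i < j` are consecutive
fixed points of `τ`, the open interval `(i,j)` is mapped into itself. -/
def PreservesFixedIntervals {n : ℕ} (τ : Equiv.Perm (Fin n)) : Prop :=
  ∀ i j : Fin n, τ i = i → τ j = j → i < j → (∀ m, i < m → m < j → τ m ≠ m) →
    ∀ m, i < m → m < j → (i < τ m ∧ τ m < j)

/-- `A` is a set of consecutive elements (an interval). -/
def IsIntervalSet {n : ℕ} (A : Finset (Fin n)) : Prop :=
  ∀ x ∈ A, ∀ z ∈ A, ∀ y, x ≤ y → y ≤ z → y ∈ A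

/-- `A` is a minimal block of `τ`: a nonempty `τ`-invariant set of consecutive
elements containing no proper such subset.  (The ordered decomposition
`{0,…,k} = A₁ ∪ ⋯ ∪ A_q` of the paper consists exactly of these blocks.) -/
def MinBlock {n : ℕ} (τ : Equiv.Perm (Fin n)) (A : Finset (Fin n)) : Prop :=
  A.Nonempty ∧ (∀ x ∈ A, τ x ∈ A) ∧ IsIntervalSet A ∧
    ∀ B ⊆ A, B.Nonempty → (∀ x ∈ B, τ x ∈ B) → IsIntervalSet B → B = A

/-- An involution with no fixed points on an invariant finset gives even cardinality. -/
lemma even_card_aux {α : Type*} [DecidableEq α] (f : α → α) (hf : Function.Involutive f)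
    (s : Finset α) (hinv : ∀ x ∈ s, f x ∈ s) (hnf : ∀ x ∈ s, f x ≠ x) :
    Even s.card := by
  induction s using Finset.strongInduction with
  | _ s ih =>
    rcases s.eq_empty_or_nonempty with rfl | ⟨a, ha⟩
    · simp
    · set t := s \ {a, f a} with ht
      have hfa : f a ∈ s := hinv a ha
      have hane : f a ≠ a := hnf a ha
      have htsub : t ⊂ s := by
        refine Finset.ssubset_iff_of_subset (Finset.sdiff_subset) |>.mpr ?_
        exact ⟨a, ha, by simp [ht]⟩
      have htinv : ∀ x ∈ t, f x ∈ t := by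
        intro x hx
        simp only [ht, Finset.mem_sdiff, Finset.mem_insert, Finset.mem_singleton] at hx ⊢
        obtain ⟨hxs, hx2⟩ := hx
        refine ⟨hinv x hxs, ?_⟩
        rintro (h | h)
        · exact hx2 (Or.inr (by rw [← h, hf]))
        · exact hx2 (Or.inl (hf.injective h))
      have htnf : ∀ x ∈ t, f x ≠ x := fun x hx => hnf x (Finset.sdiff_subset hx)
      have hcard : s.card = t.card + 2 := by
        have h2 : ({a, f a} : Finset α) ⊆ s := by
          intro x hx
          simp only [Finset.mem_insert, Finset.mem_singleton] at hx
          rcases hx with rfl | rfl <;> assumption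
        have h3 := Finset.card_sdiff_of_subset h2
        have h4 := Finset.card_le_card h2
        have hc2 : ({a, f a} : Finset α).card = 2 := by
          rw [Finset.card_insert_of_notMem (by simp [Ne.symm hane]), Finset.card_singleton]
        rw [ht]
        omega
      rw [hcard]
      exact (ih t htsub htinv htnf).add (even_two)

/-- Each minimal block of a non-crossing involution preserving intervals between
fixed points is either a singleton consisting of a fixed point, or has an even
number of elements, none of which is fixed. -/
theorem minBlock_card (k : ℕ) (τ : Equiv.Perm (Fin (k + 1)))
    (hinv : Function.Involutive τ) (hnc : NonCrossing τ)
    (hpi : PreservesFixedIntervals τ) (A : Finset (Fin (k + 1))) (hA : MinBlock τ A) :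
    (A.card = 1 ∧ ∀ x ∈ A, τ x = x) ∨ (Even A.card ∧ ∀ x ∈ A, τ x ≠ x) := by
  obtain ⟨hne, hAinv, hAint, hmin⟩ := hA
  by_cases hfix : ∃ x ∈ A, τ x = x
  · obtain ⟨x, hxA, hx⟩ := hfix
    have hBA : ({x} : Finset (Fin (k + 1))) ⊆ A := by simpa using hxA
    have heq : ({x} : Finset (Fin (k + 1))) = A := by
      refine hmin _ hBA ⟨x, by simp⟩ ?_ ?_
      · intro y hy; simp only [Finset.mem_singleton] at hy ⊢; rw [hy, hx]
      · intro a ha c hc y h1 h2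
        simp only [Finset.mem_singleton] at ha hc ⊢
        subst ha; subst hc; exact le_antisymm h2 h1
    left
    constructor
    · rw [← heq]; simp
    · intro y hy; rw [← heq, Finset.mem_singleton] at hy; rw [hy, hx]
  · push_neg at hfix
    exact Or.inr ⟨even_card_aux τ hinv A hAinv hfix, hfix⟩
end
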